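/- Let $E, F$ be Riesz spaces and $S, T : E \to F$ orthogonally additive operators. If for every $x \in E$ the infimum $R(x) = \inf\{S(u) + T(v) : x = u \sqcup v\}$ exists in $F$, then $S \wedge T$ exists in the ordered vector space of orthogonally additive operators and $(S \wedge T)(x) = R(x)$ for all $x$. -/

import Mathlib

/-- Disjointness in a Riesz space: `|x| ⊓ |y| = 0`. -/
def RDisjoint {E : Type*} [Lattice E] [AddCommGroup E] (x y : E) : Prop :=
  |x| ⊓ |y| = 0

/-- `x` is a fragment of `e` (lateral order `x ⊑ e`): `x ⊥ (e - x)`. -/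
def IsFragment {E : Type*} [Lattice E] [AddCommGroup E] (x e : E) : Prop :=
  RDisjoint x (e - x)

/-- An orthogonally additive operator. -/
def IsOAO {E F : Type*} [Lattice E] [AddCommGroup E] [Lattice F] [AddCommGroup F]
    (T : E → F) : Prop :=
  ∀ x y : E, RDisjoint x y → T (x + y) = T x + T y

/-! For disjoint `x` and `y`, the disjoint decompositions of `x + y` are exactly the sums of
disjoint decompositions of `x` and of `y`: one direction is a Riesz decomposition along the
disjoint elements `|x|` and `|y|`. Hence the set whose infimum defines `R (x + y)` is the
Minkowski sum of the sets for `x` and `y`, and infima of Minkowski sums add up. The trivial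
decompositions `x = x + 0 = 0 + x` give `R ≤ S` and `R ≤ T`, and any common lower bound `P`
satisfies `P x = P u + P v ≤ S u + T v`. -/

open Pointwise

section LatticeOrderedGroup

variable {α : Type*} [Lattice α] [AddCommGroup α] [AddLeftMono α] {a b c x y u v w z : α}

lemma inf_add_le_inf_add_inf (ha : 0 ≤ a) (hb : 0 ≤ b) (hc : 0 ≤ c) :
    c ⊓ (a + b) ≤ c ⊓ a + c ⊓ b := by
  simp only [add_inf, inf_add, le_inf_iff]
  refine ⟨⟨?_, ?_⟩, ?_, ?_⟩
  · exact inf_le_left.trans (le_add_of_nonneg_right hc)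
  · exact inf_le_left.trans (le_add_of_nonneg_left ha)
  · exact inf_le_left.trans (le_add_of_nonneg_right hb)
  · exact inf_le_right

lemma inf_add_inf_of_inf_eq_zero (hab : a ⊓ b = 0) (hc : 0 ≤ c) :
    c ⊓ a + c ⊓ b = c ⊓ (a + b) := by
  have ha : 0 ≤ a := hab ▸ inf_le_left
  have hb : 0 ≤ b := hab ▸ inf_le_right
  refine le_antisymm ?_ (inf_add_le_inf_add_inf ha hb hc)
  have hdisj : c ⊓ a ⊓ (c ⊓ b) = 0 :=
    le_antisymm (hab ▸ inf_le_inf inf_le_right inf_le_right)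
      (le_inf (le_inf hc ha) (le_inf hc hb))
  rw [← inf_add_sup (c ⊓ a), hdisj, zero_add]
  exact le_inf (sup_le inf_le_left inf_le_left)
    (sup_le (inf_le_right.trans (le_add_of_nonneg_right hb))
      (inf_le_right.trans (le_add_of_nonneg_left ha)))

lemma abs_sub_eq_sup_of_inf_eq_zero (h : a ⊓ b = 0) : |a - b| = a ⊔ b := by
  rw [← sup_sub_inf_eq_abs_sub, sup_comm, inf_comm, h, sub_zero]

lemma exists_add_eq_of_abs_le_add (hab : a ⊓ b = 0) (hz : |z| ≤ a + b) :
    ∃ z₁ z₂, z = z₁ + z₂ ∧ |z₁| ≤ |z| ⊓ a ∧ |z₂| ≤ |z| ⊓ b := by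
  have hsplit : ∀ c, 0 ≤ c → c ≤ a + b → c = c ⊓ a + c ⊓ b := fun c hc hcab => by
    rw [inf_add_inf_of_inf_eq_zero hab hc, inf_eq_left.2 hcab]
  have hpos : z⁺ ≤ |z| := sup_le (le_abs_self z) (abs_nonneg z)
  have hneg : z⁻ ≤ |z| := sup_le (neg_le_abs z) (abs_nonneg z)
  have hpart : ∀ d, 0 ≤ d → |z⁺ ⊓ d - z⁻ ⊓ d| ≤ |z| ⊓ d := fun d hd => by
    have hdisj : z⁺ ⊓ d ⊓ (z⁻ ⊓ d) = 0 :=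
      le_antisymm
        ((inf_le_inf inf_le_left inf_le_left).trans (posPart_inf_negPart_eq_zero z).le)
        (le_inf (le_inf (posPart_nonneg z) hd) (le_inf (negPart_nonneg z) hd))
    rw [abs_sub_eq_sup_of_inf_eq_zero hdisj]
    exact sup_le (inf_le_inf_right d hpos) (inf_le_inf_right d hneg)
  refine ⟨z⁺ ⊓ a - z⁻ ⊓ a, z⁺ ⊓ b - z⁻ ⊓ b, ?_, hpart a (hab ▸ inf_le_left),
    hpart b (hab ▸ inf_le_right)⟩
  conv_lhs => rw [← posPart_sub_negPart z, hsplit z⁺ (posPart_nonneg z) (hpos.trans hz),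
    hsplit z⁻ (negPart_nonneg z) (hneg.trans hz)]
  abel

end LatticeOrderedGroup

namespace RDisjoint

variable {α : Type*} [Lattice α] [AddCommGroup α] {x y u v w : α}

lemma symm (h : RDisjoint x y) : RDisjoint y x := by
  rwa [RDisjoint, inf_comm]

variable [AddLeftMono α]

lemma mono (h : RDisjoint x y) (hu : |u| ≤ |x|) (hv : |v| ≤ |y|) : RDisjoint u v :=
  le_antisymm ((inf_le_inf hu hv).trans h.le) (le_inf (abs_nonneg u) (abs_nonneg v))

lemma add_right (hu : RDisjoint x u) (hv : RDisjoint x v) : RDisjoint x (u + v) := by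
  refine le_antisymm ?_ (le_inf (abs_nonneg x) (abs_nonneg _))
  calc |x| ⊓ |u + v| ≤ |x| ⊓ (|u| + |v|) := inf_le_inf_left _ (abs_add_le u v)
    _ ≤ |x| ⊓ |u| + |x| ⊓ |v| :=
      inf_add_le_inf_add_inf (abs_nonneg u) (abs_nonneg v) (abs_nonneg x)
    _ = 0 := by rw [show |x| ⊓ |u| = 0 from hu, show |x| ⊓ |v| = 0 from hv, add_zero]

lemma add_left (hu : RDisjoint u x) (hv : RDisjoint v x) : RDisjoint (u + v) x :=
  (hu.symm.add_right hv.symm).symm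

lemma sub_right (hu : RDisjoint x u) (hv : RDisjoint x v) : RDisjoint x (u - v) :=
  sub_eq_add_neg u v ▸ hu.add_right (by rwa [RDisjoint, abs_neg])

lemma abs_left_le (h : RDisjoint u v) : |u| ≤ |u + v| := by
  have h₁ : |u| ≤ |u + v| + |v| := by simpa using abs_add_le (u + v) (-v)
  calc |u| = |u| ⊓ (|u + v| + |v|) := (inf_eq_left.2 h₁).symm
    _ ≤ |u| ⊓ |u + v| + |u| ⊓ |v| :=
      inf_add_le_inf_add_inf (abs_nonneg _) (abs_nonneg v) (abs_nonneg u)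
    _ ≤ |u + v| := by rw [show |u| ⊓ |v| = 0 from h, add_zero]; exact inf_le_right

lemma abs_right_le (h : RDisjoint u v) : |v| ≤ |u + v| :=
  add_comm v u ▸ h.symm.abs_left_le

lemma eq_zero_of_self (h : RDisjoint w w) : w = 0 := by
  have h₀ : |w| = 0 := by rwa [RDisjoint, inf_idem] at h
  exact le_antisymm (h₀ ▸ le_abs_self w) (neg_nonpos.1 (h₀ ▸ neg_le_abs w))

end RDisjoint

lemma rdisjoint_zero_right {α : Type*} [Lattice α] [AddCommGroup α] [AddLeftMono α] (x : α) :
    RDisjoint x 0 := by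
  rw [RDisjoint, abs_zero, inf_eq_right.2 (abs_nonneg x)]

section Refinement

variable {α : Type*} [Lattice α] [AddCommGroup α] [AddLeftMono α] {x y u v : α}

lemma RDisjoint.exists_refinement (hxy : RDisjoint x y) (huv : RDisjoint u v)
    (h : u + v = x + y) :
    ∃ u₁ u₂ v₁ v₂, u = u₁ + u₂ ∧ v = v₁ + v₂ ∧ x = u₁ + v₁ ∧ y = u₂ + v₂ ∧
      RDisjoint u₁ v₁ ∧ RDisjoint u₂ v₂ ∧ RDisjoint u₁ u₂ ∧ RDisjoint v₁ v₂ := by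
  have hsum : |u + v| ≤ |x| + |y| := h ▸ abs_add_le x y
  have hu : |u| ≤ |x| + |y| := huv.abs_left_le.trans hsum
  have hv : |v| ≤ |x| + |y| := huv.abs_right_le.trans hsum
  obtain ⟨u₁, u₂, rfl, hu₁, hu₂⟩ := exists_add_eq_of_abs_le_add hxy hu
  obtain ⟨v₁, v₂, rfl, hv₁, hv₂⟩ := exists_add_eq_of_abs_le_add hxy hv
  have hyu₁ : RDisjoint y u₁ := hxy.symm.mono le_rfl (hu₁.trans inf_le_right)
  have hyv₁ : RDisjoint y v₁ := hxy.symm.mono le_rfl (hv₁.trans inf_le_right)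
  -- `w` is disjoint from `y` by its first expression and built from pieces of `y` by its
  -- second, so it is disjoint from itself.
  set w := x - (u₁ + v₁) with hw
  have hyw : RDisjoint y w := hxy.symm.sub_right (hyu₁.add_right hyv₁)
  have hw' : w = u₂ + v₂ - y := by rw [hw, sub_eq_sub_iff_add_eq_add, ← h]; abel
  have hww : RDisjoint w w := by
    rw [hw'] at hyw ⊢
    exact ((hyw.symm.mono le_rfl (hu₂.trans inf_le_right)).add_right
      (hyw.symm.mono le_rfl (hv₂.trans inf_le_right))).sub_right hyw.symm
  have hw₀ := hww.eq_zero_of_self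
  refine ⟨u₁, u₂, v₁, v₂, rfl, rfl, sub_eq_zero.1 hw₀, ?_, ?_, ?_, ?_, ?_⟩
  · exact (sub_eq_zero.1 (hw' ▸ hw₀)).symm
  · exact huv.mono (hu₁.trans inf_le_left) (hv₁.trans inf_le_left)
  · exact huv.mono (hu₂.trans inf_le_left) (hv₂.trans inf_le_left)
  · exact hxy.mono (hu₁.trans inf_le_right) (hu₂.trans inf_le_right)
  · exact hxy.mono (hv₁.trans inf_le_right) (hv₂.trans inf_le_right)

end Refinement

section SplitSums

variable {E F : Type*} [Lattice E] [AddCommGroup E] [AddLeftMono E] [Lattice F] [AddCommGroup F]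

def splitSums (S T : E → F) (x : E) : Set F :=
  {z | ∃ u v : E, RDisjoint u v ∧ x = u + v ∧ z = S u + T v}

variable {S T : E → F} {x y : E}

lemma IsOAO.map_zero {T : E → F} (hT : IsOAO T) : T 0 = 0 := by
  simpa using hT 0 0 (rdisjoint_zero_right 0)

lemma splitSums_add (hS : IsOAO S) (hT : IsOAO T) (hxy : RDisjoint x y) :
    splitSums S T (x + y) = splitSums S T x + splitSums S T y := by
  ext z
  simp only [Set.mem_add]
  constructor
  · rintro ⟨u, v, huv, h, rfl⟩
    obtain ⟨u₁, u₂, v₁, v₂, rfl, rfl, rfl, rfl, h₁, h₂, hu, hv⟩ :=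
      hxy.exists_refinement huv h.symm
    refine ⟨S u₁ + T v₁, ⟨u₁, v₁, h₁, rfl, rfl⟩, S u₂ + T v₂, ⟨u₂, v₂, h₂, rfl, rfl⟩, ?_⟩
    rw [hS u₁ u₂ hu, hT v₁ v₂ hv]
    abel
  · rintro ⟨_, ⟨u₁, v₁, h₁, rfl, rfl⟩, _, ⟨u₂, v₂, h₂, rfl, rfl⟩, rfl⟩
    have hu₁v₂ := hxy.mono h₁.abs_left_le h₂.abs_right_le
    have hv₁u₂ := hxy.mono h₁.abs_right_le h₂.abs_left_le
    refine ⟨u₁ + u₂, v₁ + v₂, ?_, by abel, ?_⟩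
    · exact (h₁.add_right hu₁v₂).add_left (hv₁u₂.symm.add_right h₂)
    · rw [hS u₁ u₂ (hxy.mono h₁.abs_left_le h₂.abs_left_le),
        hT v₁ v₂ (hxy.mono h₁.abs_right_le h₂.abs_right_le)]
      abel

end SplitSums

variable {E F : Type*}
  [Lattice E] [AddCommGroup E] [CovariantClass E E (· + ·) (· ≤ ·)]
  [Lattice F] [AddCommGroup F] [CovariantClass F F (· + ·) (· ≤ ·)]

/-- If the pointwise infimum formula exists, it defines the meet `S ∧ T` of two OAOs
in the ordered vector space of all OAOs. -/
theorem oao_inf_exists (S T : E → F) (hS : IsOAO S) (hT : IsOAO T) (R : E → F)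
    (hR : ∀ x : E,
      IsGLB {z : F | ∃ u v : E, RDisjoint u v ∧ x = u + v ∧ z = S u + T v} (R x)) :
    IsOAO R ∧ (∀ x, R x ≤ S x) ∧ (∀ x, R x ≤ T x) ∧
    ∀ P : E → F, IsOAO P → (∀ x, P x ≤ S x) → (∀ x, P x ≤ T x) → ∀ x, P x ≤ R x := by
  have hR' : ∀ x, IsGLB (splitSums S T x) (R x) := hR
  refine ⟨fun x y hxy => ?_, fun x => ?_, fun x => ?_, fun P hP hPS hPT x => ?_⟩
  · exact (hR' (x + y)).unique (splitSums_add hS hT hxy ▸ (hR' x).add (hR' y))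
  · exact (hR x).1 ⟨x, 0, rdisjoint_zero_right x, (add_zero x).symm,
      by rw [hT.map_zero, add_zero]⟩
  · exact (hR x).1 ⟨0, x, (rdisjoint_zero_right x).symm, (zero_add x).symm,
      by rw [hS.map_zero, zero_add]⟩
  · refine (hR x).2 ?_
    rintro _ ⟨u, v, huv, rfl, rfl⟩
    rw [hP u v huv]
    exact add_le_add (hPS u) (hPT v)
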